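/- (Discrete-time RAGE theorem, continuous part.) Let U be a unitary operator on ℓ²(ℤ,ℂ) and ψ ∈ ℓ²(ℤ,ℂ). Suppose there is a finite Borel measure μ on the unit circle ∂𝔻 with no atoms (μ({z}) = 0 for every z ∈ ∂𝔻) whose moments match ψ: ∫_{∂𝔻} zⁿ dμ(z) = ⟨ψ, Uⁿψ⟩ for all n ∈ ℤ (i.e. the spectral measure of ψ is continuous). Then for every J ∈ ℕ, lim_{N→∞} (1/(2N+1))·Σ_{n=−N}^{N} Σ_{j=−J}^{J} |⟨δ_j, Uⁿψ⟩|² = 0. -/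

import Mathlib

noncomputable section
open scoped ENNReal
open MeasureTheory

/-- The Hilbert space ℓ²(ℤ, ℂ). -/
abbrev l2Z := lp (fun _ : ℤ => ℂ) 2

/-- The standard orthonormal basis vector δ_j of ℓ²(ℤ, ℂ). -/
def delta (j : ℤ) : l2Z := lp.single 2 j (1 : ℂ)

open Finset Filter Topology ComplexConjugate

/-! Put `μ̂ k = ∫ w ^ k ∂μ = ⟪ψ, U ^ k ψ⟫`. The sum `S = ∑_{|n| ≤ N} |⟪δ_j, U ^ n ψ⟫|²` is
`⟪δ_j, A δ_j⟫` for the positive operator `A = ∑_{|n| ≤ N} |U ^ n ψ⟩⟨U ^ n ψ|`, so it is at most the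
Hilbert–Schmidt norm of `A`, whose square is `∑_{|m|, |n| ≤ N} |μ̂ (n - m)|² ≤
(2N + 1) ∑_{|k| ≤ 2N} |μ̂ k|²`. Hence `S / (2N + 1)` is controlled by the Cesàro mean of `|μ̂ k|²`
over `|k| ≤ 2N`, which tends to `0` by Wiener's theorem: that mean is the `μ ⊗ μ`-integral of the
Dirichlet means of `(z w̄) ^ k`, which are bounded by `1` and tend to `0` off the diagonal
`z = w`, a null set because `μ` has no atoms. -/

section HilbertSchmidt
variable {𝕜 E ι : Type*} [RCLike 𝕜] [NormedAddCommGroup E] [InnerProductSpace 𝕜 E]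

lemma norm_sum_smul_sq_le (s : Finset ι) (a : ι → 𝕜) (x : ι → E) :
    ‖∑ m ∈ s, a m • x m‖ ^ 2 ≤
      ∑ m ∈ s, ∑ n ∈ s, ‖a m‖ * ‖a n‖ * ‖(inner 𝕜 (x m) (x n) : 𝕜)‖ := by
  set v := ∑ m ∈ s, a m • x m
  have hvv : (inner 𝕜 v v : 𝕜) =
      ∑ m ∈ s, ∑ n ∈ s, starRingEnd 𝕜 (a m) * a n * inner 𝕜 (x m) (x n) := by
    simp only [v, sum_inner, inner_sum, inner_smul_left, inner_smul_right, mul_sum]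
    exact sum_comm.trans (sum_congr rfl fun m _ => sum_congr rfl fun n _ => by ring)
  calc ‖v‖ ^ 2 = ‖(inner 𝕜 v v : 𝕜)‖ := by
        rw [inner_self_eq_norm_sq_to_K, norm_pow, RCLike.norm_ofReal, abs_norm]
    _ ≤ _ := by
        rw [hvv]
        refine (norm_sum_le _ _).trans (sum_le_sum fun m _ => (norm_sum_le _ _).trans_eq ?_)
        simp only [norm_mul, RCLike.norm_conj]

lemma sq_sum_sum_mul_mul_le (s : Finset ι) (f : ι → ℝ) (g : ι → ι → ℝ) :
    (∑ m ∈ s, ∑ n ∈ s, f m * f n * g m n) ^ 2 ≤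
      (∑ m ∈ s, f m ^ 2) ^ 2 * ∑ m ∈ s, ∑ n ∈ s, g m n ^ 2 := by
  have h := sum_mul_sq_le_sq_mul_sq (s ×ˢ s) (fun p => f p.1 * f p.2) (fun p => g p.1 p.2)
  simp only [sum_product, mul_pow] at h
  rwa [sq (∑ m ∈ s, f m ^ 2), sum_mul_sum]

theorem sq_sum_norm_inner_sq_le (s : Finset ι) (e : E) (x : ι → E) :
    (∑ n ∈ s, ‖(inner 𝕜 e (x n) : 𝕜)‖ ^ 2) ^ 2 ≤
      ‖e‖ ^ 4 * ∑ m ∈ s, ∑ n ∈ s, ‖(inner 𝕜 (x m) (x n) : 𝕜)‖ ^ 2 := by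
  set c : ι → 𝕜 := fun n => inner 𝕜 e (x n)
  set S := ∑ n ∈ s, ‖c n‖ ^ 2
  set G := ∑ m ∈ s, ∑ n ∈ s, ‖(inner 𝕜 (x m) (x n) : 𝕜)‖ ^ 2
  -- `S = ⟪e, v⟫ ≤ ‖e‖ ‖v‖`, while Cauchy–Schwarz over `s ×ˢ s` gives `‖v‖ ^ 4 ≤ S ^ 2 G`.
  set v := ∑ n ∈ s, starRingEnd 𝕜 (c n) • x n
  have hS : (inner 𝕜 e v : 𝕜) = S := by
    simp only [v, S, inner_sum, inner_smul_right, RCLike.conj_mul, c]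
    push_cast; rfl
  have hSv : S ≤ ‖e‖ * ‖v‖ := by
    have := norm_inner_le_norm (𝕜 := 𝕜) e v
    rwa [hS, RCLike.norm_ofReal, abs_of_nonneg (by positivity)] at this
  have hv : ‖v‖ ^ 4 ≤ S ^ 2 * G := by
    have := sq_sum_sum_mul_mul_le s (fun n => ‖c n‖) fun m n => ‖(inner 𝕜 (x m) (x n) : 𝕜)‖
    have h2 := norm_sum_smul_sq_le s (fun n => starRingEnd 𝕜 (c n)) x
    simp only [RCLike.norm_conj] at h2
    calc ‖v‖ ^ 4 = (‖v‖ ^ 2) ^ 2 := by ring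
      _ ≤ _ := pow_le_pow_left₀ (by positivity) h2 2
      _ ≤ S ^ 2 * G := this
  rcases (show 0 ≤ S by positivity).eq_or_lt with hS0 | hSpos
  · rw [← hS0, zero_pow two_ne_zero]; positivity
  · have : S ^ 2 * S ^ 2 ≤ S ^ 2 * (‖e‖ ^ 4 * G) := by
      calc S ^ 2 * S ^ 2 ≤ (‖e‖ * ‖v‖) ^ 4 := by
            rw [← pow_add]; exact pow_le_pow_left₀ hSpos.le hSv 4
        _ = ‖e‖ ^ 4 * ‖v‖ ^ 4 := by ring
        _ ≤ ‖e‖ ^ 4 * (S ^ 2 * G) := by gcongr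
        _ = S ^ 2 * (‖e‖ ^ 4 * G) := by ring
    exact le_of_mul_le_mul_left this (by positivity)

end HilbertSchmidt

lemma MeasureTheory.Measure.prod_diagonal_eq_zero {α : Type*} [MeasurableSpace α] [MeasurableEq α]
    (μ ν : Measure α) [SFinite ν] [NullSingletonClass ν] : μ.prod ν (Set.diagonal α) = 0 := by
  rw [Measure.measure_prod_null measurableSet_diagonal]
  refine Eventually.of_forall fun x => ?_
  have : Prod.mk x ⁻¹' Set.diagonal α = {x} := by ext; simp [eq_comm]
  simp [this]

section Dirichlet

def dirichletMean (M : ℕ) (u : ℂ) : ℂ := (2 * M + 1 : ℂ)⁻¹ * ∑ k ∈ Icc (-(M : ℤ)) M, u ^ k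

lemma Icc_neg_natCast_eq_image_range (M : ℕ) :
    Icc (-(M : ℤ)) M = (range (2 * M + 1)).image fun i : ℕ => (i : ℤ) - M := by
  ext k
  simp only [mem_Icc, mem_image, mem_range]
  constructor
  · rintro ⟨h1, h2⟩; exact ⟨(k + M).toNat, by omega, by omega⟩
  · rintro ⟨i, hi, rfl⟩; omega

lemma norm_sum_zpow_Icc_le {u : ℂ} (hu : ‖u‖ = 1) (hu1 : u ≠ 1) (M : ℕ) :
    ‖∑ k ∈ Icc (-(M : ℤ)) M, u ^ k‖ ≤ 2 / ‖u - 1‖ := by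
  have hu0 : u ≠ 0 := norm_ne_zero_iff.mp (by rw [hu]; exact one_ne_zero)
  have hgeom : ∑ k ∈ Icc (-(M : ℤ)) M, u ^ k =
      u ^ (-(M : ℤ)) * ((u ^ (2 * M + 1) - 1) / (u - 1)) := by
    rw [Icc_neg_natCast_eq_image_range, sum_image fun i _ j _ h => by simpa using h,
      ← geom_sum_eq hu1, mul_sum]
    refine sum_congr rfl fun i _ => ?_
    rw [← zpow_natCast u i, ← zpow_add₀ hu0, neg_add_eq_sub]
  rw [hgeom, norm_mul, norm_zpow, hu, one_zpow, one_mul, norm_div]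
  gcongr
  calc ‖u ^ (2 * M + 1) - 1‖ ≤ ‖u ^ (2 * M + 1)‖ + ‖(1 : ℂ)‖ := norm_sub_le _ _
    _ = 2 := by rw [norm_pow, hu, one_pow, norm_one]; norm_num

lemma norm_two_mul_natCast_add_one (M : ℕ) : ‖(2 * M + 1 : ℂ)‖ = 2 * M + 1 := by
  exact_mod_cast Complex.norm_natCast (2 * M + 1)

lemma measurable_dirichletMean (M : ℕ) : Measurable (dirichletMean M) := by
  unfold dirichletMean; fun_prop

lemma norm_dirichletMean_le_one {u : ℂ} (hu : ‖u‖ = 1) (M : ℕ) : ‖dirichletMean M u‖ ≤ 1 := by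
  have hsum : ‖∑ k ∈ Icc (-(M : ℤ)) M, u ^ k‖ ≤ 2 * M + 1 := by
    refine (norm_sum_le _ _).trans ?_
    simp only [norm_zpow, hu, one_zpow, sum_const, Int.card_Icc, nsmul_eq_mul, mul_one]
    rw [show (M + 1 - -(M : ℤ)).toNat = 2 * M + 1 by omega]
    push_cast; rfl
  rw [dirichletMean, norm_mul, norm_inv, norm_two_mul_natCast_add_one]
  exact inv_mul_le_one_of_le₀ hsum (by positivity)

lemma tendsto_dirichletMean_zero {u : ℂ} (hu : ‖u‖ = 1) (hu1 : u ≠ 1) :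
    Tendsto (fun M => dirichletMean M u) atTop (𝓝 0) := by
  have hinv : Tendsto (fun M : ℕ => (2 * (M : ℝ) + 1)⁻¹) atTop (𝓝 0) :=
    tendsto_inv_atTop_zero.comp <| tendsto_atTop_add_const_right _ _ <|
      tendsto_natCast_atTop_atTop.const_mul_atTop two_pos
  refine squeeze_zero_norm (fun M => ?_) (by simpa using hinv.const_mul (2 / ‖u - 1‖))
  rw [dirichletMean, norm_mul, norm_inv, norm_two_mul_natCast_add_one, mul_comm]
  exact mul_le_mul_of_nonneg_right (norm_sum_zpow_Icc_le hu hu1 M) (by positivity)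

end Dirichlet

section Wiener

lemma Complex.eq_of_mul_conj_eq_one {z w : ℂ} (hw : ‖w‖ = 1) (h : z * conj w = 1) : z = w :=
  calc z = z * (conj w * w) := by rw [Complex.conj_mul', hw]; simp
    _ = w := by rw [← mul_assoc, h, one_mul]

variable {μ : Measure ℂ}

lemma integral_prod_mul_conj_zpow [SFinite μ] (k : ℤ) :
    ∫ p, (p.1 * conj p.2) ^ k ∂μ.prod μ = ((‖∫ w, w ^ k ∂μ‖ ^ 2 : ℝ) : ℂ) := by
  simp_rw [mul_zpow, ← map_zpow₀]
  rw [integral_prod_mul (fun w : ℂ => w ^ k) fun w => conj (w ^ k), integral_conj,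
    Complex.mul_conj']
  norm_cast

lemma integrable_prod_mul_conj_zpow [IsFiniteMeasure μ] (hμ : ∀ᵐ w ∂μ, ‖w‖ = 1) (k : ℤ) :
    Integrable (fun p : ℂ × ℂ => (p.1 * conj p.2) ^ k) (μ.prod μ) := by
  refine .of_bound (by fun_prop : Measurable _).aestronglyMeasurable 1 ?_
  filter_upwards [Measure.quasiMeasurePreserving_fst.ae hμ,
    Measure.quasiMeasurePreserving_snd.ae hμ] with p h1 h2
  simp [norm_zpow, h1, h2]

def meanSqMoment (μ : Measure ℂ) (M : ℕ) : ℝ :=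
  1 / (2 * (M : ℝ) + 1) * ∑ k ∈ Icc (-(M : ℤ)) M, ‖∫ w, w ^ k ∂μ‖ ^ 2

lemma integral_dirichletMean_prod [IsFiniteMeasure μ] (hμ : ∀ᵐ w ∂μ, ‖w‖ = 1) (M : ℕ) :
    ∫ p, dirichletMean M (p.1 * conj p.2) ∂μ.prod μ = meanSqMoment μ M := by
  simp only [dirichletMean, meanSqMoment]
  rw [integral_const_mul, integral_finsetSum _ fun k _ => integrable_prod_mul_conj_zpow hμ k]
  simp only [integral_prod_mul_conj_zpow]
  push_cast; ring

theorem tendsto_meanSqMoment_zero [IsFiniteMeasure μ] [NullSingletonClass μ]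
    (hμ : ∀ᵐ w ∂μ, ‖w‖ = 1) : Tendsto (meanSqMoment μ) atTop (𝓝 0) := by
  have hae : ∀ᵐ p ∂μ.prod μ, ‖p.1 * conj p.2‖ = 1 ∧ p.1 * conj p.2 ≠ 1 := by
    filter_upwards [Measure.quasiMeasurePreserving_fst.ae hμ,
      Measure.quasiMeasurePreserving_snd.ae hμ,
      measure_eq_zero_iff_ae_notMem.mp (Measure.prod_diagonal_eq_zero μ μ)] with p h1 h2 hdiag
    exact ⟨by simp [h1, h2], fun h => hdiag (Complex.eq_of_mul_conj_eq_one h2 h)⟩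
  rw [← tendsto_ofReal_iff]
  simp_rw [← integral_dirichletMean_prod hμ, Complex.ofReal_zero]
  rw [← integral_zero (ℂ × ℂ) ℂ]
  refine tendsto_integral_of_dominated_convergence (fun _ => 1)
    (fun M => ((measurable_dirichletMean M).comp (by fun_prop)).aestronglyMeasurable)
    (integrable_const 1) (fun M => ?_) ?_
  · filter_upwards [hae] with p hp using norm_dirichletMean_le_one hp.1 M
  · filter_upwards [hae] with p hp using tendsto_dirichletMean_zero hp.1 hp.2

end Wiener

lemma LinearIsometryEquiv.inner_zpow_apply_zpow_apply {𝕜 E : Type*} [RCLike 𝕜]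
    [NormedAddCommGroup E] [InnerProductSpace 𝕜 E] (U : E ≃ₗᵢ[𝕜] E) (ψ : E) (m n : ℤ) :
    (inner 𝕜 ((U ^ m) ψ) ((U ^ n) ψ) : 𝕜) = inner 𝕜 ψ ((U ^ (n - m)) ψ) := by
  rw [show U ^ n = U ^ m * U ^ (n - m) by rw [← zpow_add, add_sub_cancel]]
  exact (U ^ m).inner_map_map ψ _

lemma norm_delta (j : ℤ) : ‖delta j‖ = 1 :=
  (lp.norm_single (p := 2) (E := fun _ : ℤ => ℂ) (by norm_num) j 1).trans norm_one

lemma sum_Icc_sum_Icc_sub_le (f : ℤ → ℝ) (hf : 0 ≤ f) (N : ℕ) :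
    ∑ m ∈ Icc (-(N : ℤ)) N, ∑ n ∈ Icc (-(N : ℤ)) N, f (n - m) ≤
      (2 * N + 1) * ∑ k ∈ Icc (-(2 * N : ℤ)) (2 * N), f k := by
  have hrow : ∀ m ∈ Icc (-(N : ℤ)) N,
      ∑ n ∈ Icc (-(N : ℤ)) N, f (n - m) ≤ ∑ k ∈ Icc (-(2 * N : ℤ)) (2 * N), f k := by
    intro m hm
    rw [← sum_image (g := fun n => n - m) fun _ _ _ _ => sub_left_inj.mp]
    refine sum_le_sum_of_subset_of_nonneg ?_ fun k _ _ => hf k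
    intro k hk
    simp only [mem_image, mem_Icc] at hk hm ⊢
    omega
  refine (sum_le_card_nsmul _ _ _ hrow).trans_eq ?_
  rw [Int.card_Icc, show (N + 1 - -(N : ℤ)).toNat = 2 * N + 1 by omega, nsmul_eq_mul]
  push_cast; rfl

lemma sq_mean_norm_inner_delta_le (U : l2Z ≃ₗᵢ[ℂ] l2Z) (ψ : l2Z) {μ : Measure ℂ}
    (hmom : ∀ n : ℤ, ∫ w, w ^ n ∂μ = (inner ℂ ψ ((U ^ n) ψ) : ℂ)) (j : ℤ) (N : ℕ) :
    (1 / (2 * (N : ℝ) + 1) * ∑ n ∈ Icc (-(N : ℤ)) N, ‖(inner ℂ (delta j) ((U ^ n) ψ) : ℂ)‖ ^ 2) ^ 2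
      ≤ 2 * meanSqMoment μ (2 * N) := by
  set S := ∑ n ∈ Icc (-(N : ℤ)) N, ‖(inner ℂ (delta j) ((U ^ n) ψ) : ℂ)‖ ^ 2
  set B := ∑ k ∈ Icc (-(2 * N : ℤ)) (2 * N), ‖∫ w, w ^ k ∂μ‖ ^ 2
  have hS : S ^ 2 ≤ (2 * N + 1) * B :=
    calc S ^ 2 ≤ ∑ m ∈ Icc (-(N : ℤ)) N, ∑ n ∈ Icc (-(N : ℤ)) N, ‖∫ w, w ^ (n - m) ∂μ‖ ^ 2 := by
          simpa [norm_delta, hmom, U.inner_zpow_apply_zpow_apply] using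
            sq_sum_norm_inner_sq_le (𝕜 := ℂ) (Icc (-(N : ℤ)) N) (delta j) fun n => (U ^ n) ψ
      _ ≤ _ := sum_Icc_sum_Icc_sub_le (fun k => ‖∫ w, w ^ k ∂μ‖ ^ 2) (fun k => by positivity) N
  have hW : meanSqMoment μ (2 * N) = B / (4 * N + 1) := by
    simp only [meanSqMoment, B]; push_cast; ring
  have hB : 0 ≤ B := by positivity
  rw [hW]
  calc (1 / (2 * (N : ℝ) + 1) * S) ^ 2
    _ = S ^ 2 / (2 * N + 1) ^ 2 := by rw [mul_pow, one_div, inv_pow, inv_mul_eq_div]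
    _ ≤ (2 * N + 1) * B / (2 * N + 1) ^ 2 := by gcongr
    _ = B / (2 * N + 1) := by field_simp
    _ ≤ 2 * (B / (4 * N + 1)) := by
      rw [mul_div_assoc', div_le_div_iff₀ (by positivity) (by positivity)]; nlinarith

/-- discrete-time RAGE theorem, continuous part. If the spectral
measure of ψ (a finite measure on ∂𝔻 with moments ⟨ψ, Uⁿψ⟩) has no atoms, then the
time-averaged probability of finding Uⁿψ in any fixed finite box tends to zero. -/
theorem rage_continuous
    (U : l2Z ≃ₗᵢ[ℂ] l2Z) (ψ : l2Z)
    (μ : Measure ℂ) [IsFiniteMeasure μ]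
    (hsupp : μ (Metric.sphere (0 : ℂ) 1)ᶜ = 0)
    (hatom : ∀ z : ℂ, μ {z} = 0)
    (hmom : ∀ n : ℤ, ∫ w, w ^ n ∂μ = (inner ℂ ψ ((U ^ n) ψ) : ℂ)) :
    ∀ J : ℕ,
      Filter.Tendsto
        (fun N : ℕ => (1 / (2 * (N : ℝ) + 1)) *
          ∑ n ∈ Finset.Icc (-(N : ℤ)) (N : ℤ),
            ∑ j ∈ Finset.Icc (-(J : ℤ)) (J : ℤ),
              ‖(inner ℂ (delta j) ((U ^ n) ψ) : ℂ)‖ ^ 2)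
        Filter.atTop (nhds 0) := by
  intro J
  have : NullSingletonClass μ := ⟨hatom⟩
  have hμ : ∀ᵐ w ∂μ, ‖w‖ = 1 := by
    filter_upwards [measure_eq_zero_iff_ae_notMem.mp hsupp] with w hw
    simpa using hw
  have hW : Tendsto (fun N : ℕ => meanSqMoment μ (2 * N)) atTop (𝓝 0) :=
    (tendsto_meanSqMoment_zero hμ).comp (tendsto_id.const_mul_atTop' two_pos)
  have hj : ∀ j, Tendsto (fun N : ℕ => 1 / (2 * (N : ℝ) + 1) *
      ∑ n ∈ Icc (-(N : ℤ)) N, ‖(inner ℂ (delta j) ((U ^ n) ψ) : ℂ)‖ ^ 2) atTop (𝓝 0) :=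
    fun j => squeeze_zero (fun N => by positivity)
      (fun N => Real.le_sqrt_of_sq_le (sq_mean_norm_inner_delta_le U ψ hmom j N))
      (by simpa using (hW.const_mul 2).sqrt)
  have hsum := tendsto_finsetSum (Icc (-(J : ℤ)) J) fun j _ => hj j
  rw [sum_const_zero] at hsum
  refine hsum.congr fun N => ?_
  simp only [mul_sum]
  exact sum_comm
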